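/- arXiv:2206.02926 — 4 statements merged into one kernel-verified Lean document; each statement's English description precedes it below -/
import Mathlib

section
/- Let f(z) = A z + B − Σ_{j=1}^d C_j/(z+λ_j) belong to the class 𝒢. Then for every complex number z with z ≠ 0 and z ≠ −1/λ_j for all j, one has the identity z·f(1/z) = [B − Σ_{j=1}^d C_j/λ_j]·z + [A + Σ_{j=1}^d C_j/λ_j²] − Σ_{j=1}^d (C_j/λ_j³)/(z + 1/λ_j); moreover the function g(z) = z·f(1/z) again belongs to 𝒢: its leading coefficient B − Σ_j C_j/λ_j, its constant term A + Σ_j C_j/λ_j², and the pole weights C_j/λ_j³ are all positive semidefinite, the new pole locations 1/λ_j are positive, and g(0) = A is positive semidefinite. -/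
open Matrix BigOperators Complex
open scoped ComplexOrder

lemma psd_smul_real {n : ℕ} {c : ℝ} (hc : 0 ≤ c) {M : Matrix (Fin n) (Fin n) ℂ}
    (hM : M.PosSemidef) : ((c : ℂ) • M).PosSemidef := by
  constructor
  · unfold Matrix.IsHermitian
    rw [Matrix.conjTranspose_smul, hM.1.eq]
    simp
  · exact (hM.smul (a := (c : ℂ)) (by exact_mod_cast hc)).2

lemma psd_sum {n d : ℕ} (f : Fin d → Matrix (Fin n) (Fin n) ℂ)
    (h : ∀ j, (f j).PosSemidef) : (∑ j, f j).PosSemidef :=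
  Finset.sum_induction f _ (fun _ _ ha hb => ha.add hb) Matrix.PosSemidef.zero
    (fun i _ => h i)

/-- For `f ∈ 𝒢`, the reflection `g(z) = z • f(1/z)` has the stated
partial-fraction representation, all its coefficient matrices are positive semidefinite,
the new pole locations `1/λⱼ` are positive, and `g(0) = A ≥ 0`. -/
theorem reflection_maps_G_to_itself {n d : ℕ}
    (lam : Fin d → ℝ) (hlam : ∀ j, 0 < lam j)
    (A B : Matrix (Fin n) (Fin n) ℂ) (C : Fin d → Matrix (Fin n) (Fin n) ℂ)
    (hA : A.PosSemidef) (hB : B.PosSemidef) (hC : ∀ j, (C j).PosSemidef)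
    (hf0 : (B - ∑ j, ((lam j : ℂ))⁻¹ • C j).PosSemidef) :
    (∀ z : ℂ, z ≠ 0 → (∀ j, z ≠ -((lam j : ℂ))⁻¹) →
      z • (z⁻¹ • A + B - ∑ j, (z⁻¹ + (lam j : ℂ))⁻¹ • C j) =
        z • (B - ∑ j, ((lam j : ℂ))⁻¹ • C j)
          + (A + ∑ j, (((lam j : ℂ)) ^ 2)⁻¹ • C j)
          - ∑ j, (z + ((lam j : ℂ))⁻¹)⁻¹ • ((((lam j : ℂ)) ^ 3)⁻¹ • C j))
    ∧ (B - ∑ j, ((lam j : ℂ))⁻¹ • C j).PosSemidef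
    ∧ (A + ∑ j, (((lam j : ℂ)) ^ 2)⁻¹ • C j).PosSemidef
    ∧ (∀ j, ((((lam j : ℂ)) ^ 3)⁻¹ • C j).PosSemidef)
    ∧ (∀ j, 0 < (lam j)⁻¹)
    ∧ (A + ∑ j, (((lam j : ℂ)) ^ 2)⁻¹ • C j)
        - ∑ j, (((lam j : ℂ))⁻¹)⁻¹ • ((((lam j : ℂ)) ^ 3)⁻¹ • C j) = A
    ∧ A.PosSemidef := by
  have hlam0 : ∀ j, (lam j : ℂ) ≠ 0 := fun j => by
    exact_mod_cast (hlam j).ne'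
  refine ⟨?_, hf0, ?_, ?_, ?_, ?_, hA⟩
  · intro z hz hpole
    have key : ∀ j, z * (z⁻¹ + (lam j : ℂ))⁻¹ =
        z * ((lam j : ℂ))⁻¹ - (((lam j : ℂ)) ^ 2)⁻¹
          + (z + ((lam j : ℂ))⁻¹)⁻¹ * (((lam j : ℂ)) ^ 3)⁻¹ := by
      intro j
      have h1 : z⁻¹ + (lam j : ℂ) ≠ 0 := by
        intro h
        apply hpole j
        have : (lam j : ℂ) = -z⁻¹ := by linear_combination h
        rw [this]
        field_simp
      have h2 : z + ((lam j : ℂ))⁻¹ ≠ 0 := by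
        intro h
        exact hpole j (by linear_combination h)
      have h3 : 1 + z * (lam j : ℂ) ≠ 0 := by
        intro h
        apply hpole j
        have hz2 : z * (lam j : ℂ) = -1 := by linear_combination h
        calc z = (z * (lam j : ℂ)) * ((lam j : ℂ))⁻¹ := by
                field_simp [hlam0 j]
          _ = -((lam j : ℂ))⁻¹ := by rw [hz2]; ring
      have e1 : z⁻¹ + (lam j : ℂ) = (1 + z * (lam j : ℂ)) / z := by
        field_simp [hz]
      have e2 : z + ((lam j : ℂ))⁻¹ = (1 + z * (lam j : ℂ)) / (lam j : ℂ) := by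
        field_simp [hlam0 j]
        ring
      rw [e1, e2, inv_div, inv_div]
      field_simp [hz, hlam0 j, h3]
      ring
    calc z • (z⁻¹ • A + B - ∑ j, (z⁻¹ + (lam j : ℂ))⁻¹ • C j)
        = A + z • B - ∑ j, (z * (z⁻¹ + (lam j : ℂ))⁻¹) • C j := by
          rw [smul_sub, smul_add, smul_smul, mul_inv_cancel₀ hz, one_smul,
            Finset.smul_sum]
          simp_rw [smul_smul]
      _ = A + z • B - ∑ j, ((z * ((lam j : ℂ))⁻¹) • C j
            - (((lam j : ℂ)) ^ 2)⁻¹ • C j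
            + ((z + ((lam j : ℂ))⁻¹)⁻¹ * (((lam j : ℂ)) ^ 3)⁻¹) • C j) := by
          congr 1
          refine Finset.sum_congr rfl fun j _ => ?_
          rw [key j, add_smul, sub_smul]
      _ = _ := by
          rw [Finset.sum_add_distrib, Finset.sum_sub_distrib, smul_sub,
            Finset.smul_sum]
          simp_rw [smul_smul]
          abel
  · refine hA.add (psd_sum _ fun j => ?_)
    have : (((lam j : ℂ)) ^ 2)⁻¹ = ((((lam j) ^ 2)⁻¹ : ℝ) : ℂ) := by push_cast; ring
    rw [this]
    exact psd_smul_real (by positivity) (hC j)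
  · intro j
    have : (((lam j : ℂ)) ^ 3)⁻¹ = ((((lam j) ^ 3)⁻¹ : ℝ) : ℂ) := by push_cast; ring
    rw [this]
    exact psd_smul_real (inv_nonneg.mpr (pow_nonneg (hlam j).le 3)) (hC j)
  · exact fun j => inv_pos.mpr (hlam j)
  · have : ∀ j : Fin d, (((lam j : ℂ))⁻¹)⁻¹ • ((((lam j : ℂ)) ^ 3)⁻¹ • C j)
        = (((lam j : ℂ)) ^ 2)⁻¹ • C j := fun j => by
      rw [smul_smul, inv_inv, show (lam j : ℂ) ^ 3 = lam j * (lam j) ^ 2 by ring,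
        mul_inv, ← mul_assoc, mul_inv_cancel₀ (hlam0 j), one_mul]
    simp_rw [this]
    abel
end

section
/- Let f be a scalar function in the class 𝒢, i.e., f(z) = a z + b − Σ_{j=1}^d c_j/(z+λ_j) with a, b ≥ 0, c_j ≥ 0, λ_j > 0 distinct, and f(0) = b − Σ_j c_j/λ_j ≥ 0. Then f admits a finite J-fraction expansion: there exist an integer N ≥ 0 and real numbers a_0, b_0 ≥ 0 and a_k, b_k > 0 for 1 ≤ k ≤ N, such that, defining g_N(z) = a_N z + b_N and g_k(z) = a_k z + b_k − 1/g_{k+1}(z) for k = N−1, …, 0, one has f(z) = g_0(z) for all sufficiently large real z (hence as rational functions). -/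
open BigOperators Complex

/-- Finite J-fraction built from the inside out: `JFrac a b 0 z = a 0 * z + b 0` and
`JFrac a b (k+1) z = a (k+1) * z + b (k+1) - 1 / JFrac a b k z`. -/
noncomputable def JFrac (a b : ℕ → ℝ) : ℕ → ℂ → ℂ
  | 0, z => (a 0 : ℂ) * z + (b 0 : ℂ)
  | (k + 1), z => (a (k + 1) : ℂ) * z + (b (k + 1) : ℂ) - 1 / JFrac a b k z

section Aux

/-- Real version of `JFrac`. -/
noncomputable def JFracR (a b : ℕ → ℝ) : ℕ → ℝ → ℝ
  | 0, x => a 0 * x + b 0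
  | (k + 1), x => a (k + 1) * x + b (k + 1) - 1 / JFracR a b k x

lemma jfrac_eq_ofReal (a b : ℕ → ℝ) (n : ℕ) (x : ℝ) :
    JFrac a b n (x : ℂ) = ((JFracR a b n x : ℝ) : ℂ) := by
  induction n with
  | zero => simp [JFrac, JFracR]
  | succ k ih => simp [JFrac, JFracR, ih]

lemma jfracR_congr {a b a' b' : ℕ → ℝ} (n : ℕ)
    (h : ∀ k ≤ n, a k = a' k ∧ b k = b' k) (x : ℝ) :
    JFracR a b n x = JFracR a' b' n x := by
  induction n with
  | zero => simp [JFracR, (h 0 le_rfl).1, (h 0 le_rfl).2]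
  | succ k ih =>
      have hk := h (k+1) le_rfl
      simp only [JFracR, hk.1, hk.2, ih (fun j hj => h j (hj.trans (Nat.le_succ k)))]

open Finset in
lemma negProd {ι : Type*} [DecidableEq ι] (t : Finset ι) (f : ι → ℝ)
    (h : ∀ i ∈ t, f i ≠ 0) :
    0 < (-1 : ℝ) ^ (t.filter (fun i => f i < 0)).card * ∏ i ∈ t, f i := by
  classical
  induction t using Finset.cons_induction with
  | empty => simp
  | cons a s ha ih =>
      have hne := h a (Finset.mem_cons_self a s)
      have ih' := ih (fun i hi => h i (Finset.mem_cons_of_mem hi))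
      rw [Finset.filter_cons, Finset.prod_cons]
      by_cases hfa : f a < 0
      · simp only [hfa, if_pos]
        rw [Finset.card_cons, pow_succ]
        nlinarith [ih']
      · have hfa' : 0 < f a := lt_of_le_of_ne (not_lt.1 hfa) (Ne.symm hne)
        simp only [hfa, if_neg, not_false_iff]
        nlinarith [ih']

lemma exists_root_of_sign_change {f : ℝ → ℝ} (hf : Continuous f) {p q : ℝ} (hpq : p < q)
    (h : f p * f q < 0) : ∃ ζ ∈ Set.Ioo p q, f ζ = 0 := by
  rcases mul_neg_iff.1 h with ⟨hp, hq⟩ | ⟨hp, hq⟩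
  · have := intermediate_value_Ioo' hpq.le hf.continuousOn (a := p) (b := q)
    have h0 : (0:ℝ) ∈ Set.Ioo (f q) (f p) := ⟨hq, hp⟩
    rcases this h0 with ⟨ζ, hζ, hfζ⟩
    exact ⟨ζ, hζ, hfζ⟩
  · have := intermediate_value_Ioo hpq.le hf.continuousOn (a := p) (b := q)
    have h0 : (0:ℝ) ∈ Set.Ioo (f p) (f q) := ⟨hp, hq⟩
    rcases this h0 with ⟨ζ, hζ, hfζ⟩
    exact ⟨ζ, hζ, hfζ⟩

open Polynomial Finset in
lemma inv_sum_decomp (n : ℕ) (lam c : Fin (n+1) → ℝ) (hlam : ∀ j, 0 < lam j)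
    (hmono : StrictMono lam) (hc : ∀ j, 0 < c j) :
    ∃ (a' b' : ℝ) (mu c' : Fin n → ℝ), 0 < a' ∧ 0 < b' ∧ (∀ i, 0 < mu i) ∧
      StrictMono mu ∧ (∀ i, 0 < c' i) ∧
      ∀ x : ℝ, 0 < x →
        a' * x + b' - ∑ i, c' i / (x + mu i) = 1 / ∑ j, c j / (x + lam j) := by
  classical
  set D : ℝ[X] := ∏ j, (X + C (lam j)) with hD
  set Nn : ℝ[X] := ∑ j, C (c j) * ∏ i ∈ univ.erase j, (X + C (lam i)) with hNn
  set L : ℝ := ∑ j, c j with hL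
  have hLpos : 0 < L := Finset.sum_pos (fun j _ => hc j) univ_nonempty
  have hDeval : ∀ x : ℝ, D.eval x = ∏ j, (x + lam j) := by
    intro x; simp [hD, eval_prod]
  have hNneval : ∀ x : ℝ, Nn.eval x = ∑ j, c j * ∏ i ∈ univ.erase j, (x + lam i) := by
    intro x; simp [hNn, eval_finset_sum, eval_prod]
  -- value at the poles
  have hNval : ∀ j, Nn.eval (-(lam j)) = c j * ∏ i ∈ univ.erase j, (lam i - lam j) := by
    intro j
    rw [hNneval, Finset.sum_eq_single j]
    · congr 1
      refine Finset.prod_congr rfl (fun i _ => by ring)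
    · intro k _ hkj
      apply mul_eq_zero_of_right
      exact Finset.prod_eq_zero (Finset.mem_erase.2 ⟨Ne.symm hkj, mem_univ j⟩) (by ring)
    · intro hj; exact absurd (mem_univ j) hj
  have hsign : ∀ j : Fin (n+1), 0 < (-1:ℝ)^(j:ℕ) * ∏ i ∈ univ.erase j, (lam i - lam j) := by
    intro j
    have hne : ∀ i ∈ univ.erase j, lam i - lam j ≠ 0 := by
      intro i hi
      have hij : i ≠ j := (Finset.mem_erase.1 hi).1
      exact sub_ne_zero.2 (fun h => hij (hmono.injective h))
    have h0 := negProd (univ.erase j) (fun i => lam i - lam j) hne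
    have hf : (univ.erase j).filter (fun i => lam i - lam j < 0) = Finset.Iio j := by
      ext i
      simp only [Finset.mem_filter, Finset.mem_erase, Finset.mem_univ, Finset.mem_Iio,
        true_and, and_true, sub_neg]
      constructor
      · rintro ⟨-, h⟩; exact hmono.lt_iff_lt.1 h
      · intro h; exact ⟨ne_of_lt h, hmono h⟩
    rwa [hf, Fin.card_Iio] at h0
  have hNsign : ∀ j : Fin (n+1), 0 < (-1:ℝ)^(j:ℕ) * Nn.eval (-(lam j)) := by
    intro j
    rw [hNval]
    have h1 := hsign j
    have h2 := hc j
    nlinarith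
  -- roots between consecutive poles
  have hroot : ∀ i : Fin n, ∃ w ∈ Set.Ioo (-(lam i.succ)) (-(lam i.castSucc)),
      Nn.eval w = 0 := by
    intro i
    have hlt : -(lam i.succ) < -(lam i.castSucc) := by
      have := hmono (Fin.castSucc_lt_succ (i := i)); linarith
    apply exists_root_of_sign_change Nn.continuous hlt
    have h1 := hNsign i.succ
    have h2 := hNsign i.castSucc
    rw [Fin.val_succ] at h1
    rw [Fin.coe_castSucc] at h2
    rcases Nat.even_or_odd (i : ℕ) with he | ho
    · rw [Even.neg_one_pow he] at h2
      rw [Odd.neg_one_pow (Even.add_one he)] at h1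
      nlinarith
    · rw [Odd.neg_one_pow ho] at h2
      rw [Even.neg_one_pow (Odd.add_one ho)] at h1
      nlinarith
  choose w hw hwzero using hroot
  set mu : Fin n → ℝ := fun i => -(w i) with hmudef
  have hmulb : ∀ i, lam i.castSucc < mu i := by
    intro i; have := (hw i).2; simp only [hmudef]; linarith
  have hmuub : ∀ i, mu i < lam i.succ := by
    intro i; have := (hw i).1; simp only [hmudef]; linarith
  have hmupos : ∀ i, 0 < mu i := fun i => lt_trans (hlam i.castSucc) (hmulb i)
  have hmustrict : StrictMono mu := by
    intro i i' hii'
    have h1 : mu i < lam i.succ := hmuub i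
    have h2 : lam i'.castSucc < mu i' := hmulb i'
    have h3 : lam i.succ ≤ lam i'.castSucc := by
      apply hmono.monotone
      rw [Fin.le_def, Fin.val_succ, Fin.coe_castSucc]
      exact hii'
    linarith
  have hmuinj : Function.Injective mu := hmustrict.injective
  have hwinj : Function.Injective w := by
    intro i i' h
    apply hmuinj
    simp only [hmudef, h]
  -- factor Nn
  set Pmu : ℝ[X] := ∏ i, (X + C (mu i)) with hPmu
  have hPmuz : Pmu = ∏ i, (X - C (w i)) := by
    rw [hPmu]
    refine Finset.prod_congr rfl (fun i _ => ?_)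
    simp only [hmudef, map_neg, sub_eq_add_neg]
  have hPmuMonic : Pmu.Monic := monic_prod_of_monic _ _ (fun i _ => monic_X_add_C _)
  have hPmuDeg : Pmu.natDegree = n := by
    rw [hPmu, natDegree_prod_of_monic _ _ (fun i _ => monic_X_add_C _)]
    simp
  have herase : ∀ j : Fin (n+1), (∏ i ∈ univ.erase j, (X + C (lam i))).Monic ∧
      (∏ i ∈ univ.erase j, (X + C (lam i))).natDegree = n := by
    intro j
    refine ⟨monic_prod_of_monic _ _ (fun i _ => monic_X_add_C _), ?_⟩
    rw [natDegree_prod_of_monic _ _ (fun i _ => monic_X_add_C _)]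
    simp [Finset.card_erase_of_mem]
  have hNncoeff : Nn.coeff n = L := by
    rw [hNn, finset_sum_coeff, hL]
    refine Finset.sum_congr rfl (fun j _ => ?_)
    rw [coeff_C_mul]
    have h1 := (herase j).1.coeff_natDegree
    rw [(herase j).2] at h1
    rw [h1, mul_one]
  have hNndegle : Nn.natDegree ≤ n := by
    rw [hNn]
    apply Polynomial.natDegree_sum_le_of_forall_le
    intro j _
    exact le_trans (natDegree_C_mul_le _ _) (herase j).2.le
  have hNnne : Nn ≠ 0 := fun h => by
    rw [h] at hNncoeff; simp at hNncoeff; exact absurd hNncoeff.symm (ne_of_gt hLpos)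
  have hNndeg : Nn.natDegree = n :=
    le_antisymm hNndegle (le_natDegree_of_ne_zero (by rw [hNncoeff]; exact ne_of_gt hLpos))
  have hdvd : (∏ i : Fin n, (X - C (w i))) ∣ Nn := by
    apply Finset.prod_dvd_of_coprime
    · intro i _ i' _ hii'
      exact Polynomial.pairwise_coprime_X_sub_C hwinj hii'
    · intro i _
      rw [Polynomial.dvd_iff_isRoot]
      exact hwzero i
  have hNnfact : Nn = C L * Pmu := by
    obtain ⟨q, hq⟩ := hdvd
    rw [← hPmuz] at hq
    have hq0 : q ≠ 0 := by
      rintro rfl; rw [mul_zero] at hq; exact hNnne hq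
    have hqdeg : q.natDegree = 0 := by
      have hmul := natDegree_mul (hPmuMonic.ne_zero) hq0
      rw [← hq, hNndeg, hPmuDeg] at hmul
      omega
    have h1 : q = C (q.coeff 0) := eq_C_of_natDegree_eq_zero hqdeg
    have h2 : Nn.leadingCoeff = q.coeff 0 := by
      rw [hq, leadingCoeff_mul, hPmuMonic.leadingCoeff, one_mul, h1, leadingCoeff_C]
      simp
    have h3 : Nn.leadingCoeff = L := by
      rw [leadingCoeff, hNndeg]; exact hNncoeff
    rw [hq, h1, ← h2, h3, mul_comm]
  -- partial fraction decomposition of D / Pmu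
  have hDmonic : D.Monic := monic_prod_of_monic _ _ (fun j _ => monic_X_add_C _)
  have hDdeg : D.natDegree = n + 1 := by
    rw [hD, natDegree_prod_of_monic _ _ (fun j _ => monic_X_add_C _)]; simp
  set r : Fin n → ℝ := fun i => D.eval (-(mu i)) / ∏ k ∈ univ.erase i, (mu k - mu i) with hr
  set S : ℝ[X] := ∑ i, C (r i) * ∏ k ∈ univ.erase i, (X + C (mu k)) with hS
  have heraseMu : ∀ i : Fin n, (∏ k ∈ univ.erase i, (X + C (mu k))).natDegree ≤ n := by
    intro i
    rw [natDegree_prod_of_monic _ _ (fun k _ => monic_X_add_C _)]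
    have hcard : (univ.erase i).card = n - 1 := by simp [Finset.card_erase_of_mem]
    simp only [natDegree_X_add_C, Finset.sum_const, smul_eq_mul, mul_one, hcard]
    omega
  have hSdegle : S.natDegree ≤ n :=
    natDegree_sum_le_of_forall_le _ _
      (fun i _ => le_trans (natDegree_C_mul_le _ _) (heraseMu i))
  have hprodne : ∀ i : Fin n, ∏ k ∈ univ.erase i, (mu k - mu i) ≠ 0 := by
    intro i
    apply Finset.prod_ne_zero_iff.2
    intro k hk
    exact sub_ne_zero.2 (fun h => (Finset.mem_erase.1 hk).1 (hmuinj h))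
  have hHroot : ∀ i : Fin n, (D - S).eval (-(mu i)) = 0 := by
    intro i
    rw [eval_sub]
    have hSval : S.eval (-(mu i)) = D.eval (-(mu i)) := by
      rw [hS, eval_finset_sum, Finset.sum_eq_single i]
      · simp only [eval_mul, eval_C, eval_prod, eval_add, eval_X]
        have hpc : ∏ k ∈ univ.erase i, (-(mu i) + mu k)
            = ∏ k ∈ univ.erase i, (mu k - mu i) :=
          Finset.prod_congr rfl (fun k _ => by ring)
        rw [hpc]
        simp only [hr]
        exact div_mul_cancel₀ _ (hprodne i)
      · intro k _ hki
        simp only [eval_mul, eval_C, eval_prod, eval_add, eval_X]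
        apply mul_eq_zero_of_right
        exact Finset.prod_eq_zero (Finset.mem_erase.2 ⟨Ne.symm hki, mem_univ i⟩) (by ring)
      · intro h; exact absurd (mem_univ i) h
    rw [hSval, sub_self]
  have hdvd2 : Pmu ∣ (D - S) := by
    rw [hPmuz]
    apply Finset.prod_dvd_of_coprime
    · intro i _ i' _ hii'
      exact Polynomial.pairwise_coprime_X_sub_C hwinj hii'
    · intro i _
      rw [Polynomial.dvd_iff_isRoot]
      have hwi : w i = -(mu i) := by simp [hmudef]
      show (D - S).eval (w i) = 0
      rw [hwi]
      exact hHroot i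
  obtain ⟨q2, hq2⟩ := hdvd2
  have hDSmonic : (D - S).Monic := by
    apply hDmonic.sub_of_left
    have h1 : S.degree ≤ (n : WithBot ℕ) :=
      le_trans degree_le_natDegree (by exact_mod_cast hSdegle)
    have h2 : D.degree = ((n+1 : ℕ) : WithBot ℕ) := by
      rw [degree_eq_natDegree hDmonic.ne_zero, hDdeg]
    rw [h2]
    refine lt_of_le_of_lt h1 ?_
    exact_mod_cast Nat.lt_succ_self n
  have hDSdeg : (D - S).natDegree = n + 1 := by
    rw [← hDdeg]
    exact natDegree_sub_eq_left_of_natDegree_lt (by omega)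
  have hq2ne : q2 ≠ 0 := by
    rintro rfl
    rw [mul_zero] at hq2
    exact hDSmonic.ne_zero hq2
  have hq2deg : q2.natDegree = 1 := by
    have hmul := natDegree_mul hPmuMonic.ne_zero hq2ne
    rw [← hq2, hDSdeg, hPmuDeg] at hmul
    omega
  have hq2monic : q2.Monic := by
    have h1 : (D - S).leadingCoeff = Pmu.leadingCoeff * q2.leadingCoeff := by
      rw [hq2, leadingCoeff_mul]
    rw [hDSmonic.leadingCoeff, hPmuMonic.leadingCoeff, one_mul] at h1
    exact h1.symm
  set e : ℝ := q2.coeff 0 with he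
  have hq2X : q2 = X + C e := hq2monic.eq_X_add_C hq2deg
  have hDid : ∀ x : ℝ, D.eval x
      = (x + e) * ∏ i, (x + mu i) + ∑ i, r i * ∏ k ∈ univ.erase i, (x + mu k) := by
    intro x
    have hDeq : D = Pmu * (X + C e) + S := by
      rw [← hq2X, ← hq2]; ring
    rw [hDeq]
    simp only [eval_add, eval_mul, hPmu, eval_prod, eval_X, eval_C, hS, eval_finset_sum]
    ring
  have hNid : ∀ x : ℝ, Nn.eval x = L * ∏ i, (x + mu i) := by
    intro x
    rw [hNnfact]
    simp only [eval_mul, eval_C, hPmu, eval_prod, eval_add, eval_X]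
  -- signs of the residues
  have hDnum : ∀ i : Fin n, D.eval (-(mu i)) = ∏ j, (lam j - mu i) := by
    intro i
    rw [hDeval]
    exact Finset.prod_congr rfl (fun j _ => by ring)
  have hlamu : ∀ (i : Fin n) (j : Fin (n+1)),
      ((j:ℕ) ≤ (i:ℕ) → lam j < mu i) ∧ ((i:ℕ) < (j:ℕ) → mu i < lam j) := by
    intro i j
    constructor
    · intro hji
      have hle : j ≤ i.castSucc := by rw [Fin.le_def, Fin.coe_castSucc]; exact hji
      exact lt_of_le_of_lt (hmono.monotone hle) (hmulb i)
    · intro hij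
      have hle : i.succ ≤ j := by rw [Fin.le_def, Fin.val_succ]; exact hij
      exact lt_of_lt_of_le (hmuub i) (hmono.monotone hle)
  have hnumsign : ∀ i : Fin n, 0 < (-1:ℝ)^((i:ℕ)+1) * D.eval (-(mu i)) := by
    intro i
    rw [hDnum]
    have hne : ∀ j ∈ (univ : Finset (Fin (n+1))), lam j - mu i ≠ 0 := by
      intro j _
      rcases le_or_gt (j:ℕ) (i:ℕ) with h | h
      · exact ne_of_lt (sub_neg.2 ((hlamu i j).1 h))
      · exact ne_of_gt (sub_pos.2 ((hlamu i j).2 h))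
    have h0 := negProd univ (fun j => lam j - mu i) hne
    have hf : univ.filter (fun j : Fin (n+1) => lam j - mu i < 0) = Finset.Iio i.succ := by
      ext j
      simp only [Finset.mem_filter, Finset.mem_univ, Finset.mem_Iio, true_and, sub_neg]
      rw [Fin.lt_def, Fin.val_succ]
      constructor
      · intro h
        by_contra hc2
        push_neg at hc2
        have := (hlamu i j).2 (by omega)
        linarith
      · intro h
        exact (hlamu i j).1 (by omega)
    rw [hf, Fin.card_Iio, Fin.val_succ] at h0
    exact h0
  have hdensign : ∀ i : Fin n, 0 < (-1:ℝ)^(i:ℕ) * ∏ k ∈ univ.erase i, (mu k - mu i) := by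
    intro i
    have hne : ∀ k ∈ univ.erase i, mu k - mu i ≠ 0 := fun k hk =>
      sub_ne_zero.2 (fun h => (Finset.mem_erase.1 hk).1 (hmuinj h))
    have h0 := negProd (univ.erase i) (fun k => mu k - mu i) hne
    have hf : (univ.erase i).filter (fun k => mu k - mu i < 0) = Finset.Iio i := by
      ext k
      simp only [Finset.mem_filter, Finset.mem_erase, Finset.mem_univ, Finset.mem_Iio,
        true_and, and_true, sub_neg]
      constructor
      · rintro ⟨-, h⟩; exact hmustrict.lt_iff_lt.1 h
      · intro h; exact ⟨ne_of_lt h, hmustrict h⟩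
    rwa [hf, Fin.card_Iio] at h0
  have hrneg : ∀ i : Fin n, r i < 0 := by
    intro i
    have h1 := hnumsign i
    have h2 := hdensign i
    simp only [hr]
    rcases Nat.even_or_odd (i:ℕ) with hev | hod
    · rw [Even.neg_one_pow hev] at h2
      rw [Odd.neg_one_pow (Even.add_one hev)] at h1
      exact div_neg_of_neg_of_pos (by linarith) (by linarith)
    · rw [Odd.neg_one_pow hod] at h2
      rw [Even.neg_one_pow (Odd.add_one hod)] at h1
      exact div_neg_of_pos_of_neg (by linarith) (by linarith)
  -- positivity of e
  have hepos : 0 < e := by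
    have h0 := hDid 0
    rw [hDeval] at h0
    have hDpos : 0 < ∏ j, ((0:ℝ) + lam j) :=
      Finset.prod_pos (fun j _ => by have := hlam j; linarith)
    have hsumnp : ∑ i, r i * ∏ k ∈ univ.erase i, ((0:ℝ) + mu k) ≤ 0 := by
      apply Finset.sum_nonpos
      intro i _
      refine mul_nonpos_iff.2 (Or.inr ⟨le_of_lt (hrneg i), ?_⟩)
      exact le_of_lt (Finset.prod_pos (fun k _ => by have := hmupos k; linarith))
    have hPpos : 0 < ∏ i, ((0:ℝ) + mu i) :=
      Finset.prod_pos (fun i _ => by have := hmupos i; linarith)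
    have hmul : 0 < ((0:ℝ) + e) * ∏ i, ((0:ℝ) + mu i) := by linarith
    rcases mul_pos_iff.1 hmul with ⟨h1, -⟩ | ⟨-, h2⟩
    · linarith
    · linarith
  -- conclusion
  refine ⟨1/L, e/L, mu, fun i => -(r i)/L, by positivity, by positivity, hmupos, hmustrict,
    fun i => div_pos (by linarith [hrneg i]) hLpos, ?_⟩
  intro x hx
  show 1/L * x + e/L - ∑ i, (-(r i)/L) / (x + mu i) = _
  have hxlam : ∀ j, 0 < x + lam j := fun j => by have := hlam j; linarith
  have hxmu : ∀ i, 0 < x + mu i := fun i => by have := hmupos i; linarith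
  have hh : 0 < ∑ j, c j / (x + lam j) :=
    Finset.sum_pos (fun j _ => div_pos (hc j) (hxlam j)) univ_nonempty
  have hNx : Nn.eval x = (∑ j, c j / (x + lam j)) * D.eval x := by
    rw [hNneval, hDeval, Finset.sum_mul]
    refine Finset.sum_congr rfl (fun j _ => ?_)
    rw [← Finset.mul_prod_erase univ _ (mem_univ j)]
    have hne := (hxlam j).ne'
    field_simp
  have hPx : 0 < ∏ i, (x + mu i) := Finset.prod_pos (fun i _ => hxmu i)
  have hLP : L * ∏ i, (x + mu i) ≠ 0 := ne_of_gt (mul_pos hLpos hPx)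
  have hterm : ∀ i : Fin n, (-(r i)/L)/(x + mu i) * (L * ∏ k, (x + mu k))
      = -(r i) * ∏ k ∈ univ.erase i, (x + mu k) := by
    intro i
    rw [← Finset.mul_prod_erase univ _ (mem_univ i)]
    have h1 := (hxmu i).ne'
    have h2 := hLpos.ne'
    field_simp
  have key : (1/L * x + e/L - ∑ i, (-(r i)/L) / (x + mu i)) * (L * ∏ i, (x + mu i))
      = D.eval x := by
    have hsum' : (∑ i, (-(r i)/L) / (x + mu i)) * (L * ∏ i, (x + mu i))
        = ∑ i, -(r i) * ∏ k ∈ univ.erase i, (x + mu k) := by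
      rw [Finset.sum_mul]
      exact Finset.sum_congr rfl (fun i _ => hterm i)
    have h2 : (1/L * x + e/L) * (L * ∏ i, (x + mu i)) = (x + e) * ∏ i, (x + mu i) := by
      have hLne := hLpos.ne'
      field_simp
    have h3 : ∑ i, -(r i) * ∏ k ∈ univ.erase i, (x + mu k)
        = - ∑ i, r i * ∏ k ∈ univ.erase i, (x + mu k) := by
      simp [neg_mul]
    rw [sub_mul, hsum', h2, h3, sub_neg_eq_add, hDid x]
  have hLHS : 1/L * x + e/L - ∑ i, (-(r i)/L) / (x + mu i)
      = D.eval x / (L * ∏ i, (x + mu i)) := (eq_div_iff hLP).2 key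
  rw [hLHS, ← hNid x, hNx]
  rw [div_mul_eq_div_div_swap,
    div_self (ne_of_gt (show (0:ℝ) < D.eval x by rw [hDeval]; exact Finset.prod_pos fun j _ => hxlam j))]

lemma sum_inv_jfrac : ∀ (n : ℕ) (lam c : Fin (n+1) → ℝ), (∀ j, 0 < lam j) →
    StrictMono lam → (∀ j, 0 < c j) →
    ∃ (N : ℕ) (A B : ℕ → ℝ), (∀ k ≤ N, 0 < A k ∧ 0 < B k) ∧
      ∀ x : ℝ, 0 < x → JFracR A B N x = 1 / ∑ j, c j / (x + lam j) := by
  intro n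
  induction n using Nat.strong_induction_on with
  | _ n ih =>
    intro lam c hlam hmono hc
    obtain ⟨a', b', mu, c', ha', hb', hmu, hmumono, hc', hid⟩ :=
      inv_sum_decomp n lam c hlam hmono hc
    cases n with
    | zero =>
        refine ⟨0, fun _ => a', fun _ => b', fun k _ => ⟨ha', hb'⟩, ?_⟩
        intro x hx
        have h := hid x hx
        simpa [JFracR] using h
    | succ m =>
        obtain ⟨N, A, B, hAB, hJ⟩ := ih m (Nat.lt_succ_self m) mu c' hmu hmumono hc'
        refine ⟨N+1, fun k => if k ≤ N then A k else a',
          fun k => if k ≤ N then B k else b', ?_, ?_⟩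
        · intro k hk
          by_cases h : k ≤ N
          · simpa [h] using hAB k h
          · simp only [h, if_neg, not_false_iff]
            exact ⟨ha', hb'⟩
        · intro x hx
          have hS : 0 < ∑ i, c' i / (x + mu i) := by
            refine Finset.sum_pos (fun i _ => div_pos (hc' i) ?_) ⟨0, Finset.mem_univ 0⟩
            have := hmu i; linarith
          have hcongr : JFracR (fun k => if k ≤ N then A k else a')
              (fun k => if k ≤ N then B k else b') N x = JFracR A B N x :=
            jfracR_congr N (fun k hk => by simp [hk]) x
          show JFracR _ _ (N+1) x = _
          rw [JFracR, hcongr, hJ x hx, one_div_one_div]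
          have hN1 : ¬ (N+1 ≤ N) := by omega
          simp only [hN1, if_neg, not_false_iff]
          exact hid x hx

end Aux

/-- **Stieltjes/J-fraction expansion, scalar case.** A scalar
`f(z) = a z + b - ∑ⱼ cⱼ/(z+λⱼ)` in the class `𝒢` admits a finite J-fraction expansion
`f(z) = a₀ z + b₀ - 1/(a₁ z + b₁ - 1/( ⋯ - 1/(a_N z + b_N)))` with `a₀, b₀ ≥ 0` and
`aₖ, bₖ > 0` for `1 ≤ k ≤ N`, valid for all sufficiently large real `z` (hence as rational
functions). Here the outermost level of the fraction is `JFrac` at depth `N` via the index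
reversal `k ↦ N - k`, so the Lean coefficients `a k, b k` match the paper's `aₖ, bₖ`. -/
theorem scalar_J_fraction_expansion {d : ℕ}
    (lam : Fin d → ℝ) (hlam : ∀ j, 0 < lam j) (hinj : Function.Injective lam)
    (a b : ℝ) (ha : 0 ≤ a) (hb : 0 ≤ b)
    (c : Fin d → ℝ) (hc : ∀ j, 0 ≤ c j)
    (hf0 : 0 ≤ b - ∑ j, c j / lam j) :
    ∃ (N : ℕ) (A B : ℕ → ℝ),
      0 ≤ A 0 ∧ 0 ≤ B 0
      ∧ (∀ k, 1 ≤ k → k ≤ N → 0 < A k ∧ 0 < B k)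
      ∧ ∃ R : ℝ, ∀ x : ℝ, R < x →
          (a : ℂ) * (x : ℂ) + (b : ℂ) - ∑ j, (c j : ℂ) / ((x : ℂ) + (lam j : ℂ)) =
            JFrac (fun k => A (N - k)) (fun k => B (N - k)) N (x : ℂ) := by
  classical
  set s : Finset (Fin d) := Finset.univ.filter (fun j => 0 < c j) with hs
  have hsum : ∀ x : ℝ, ∑ j, c j / (x + lam j) = ∑ j ∈ s, c j / (x + lam j) := by
    intro x
    refine (Finset.sum_subset (Finset.subset_univ s) ?_).symm
    intro j _ hj
    have hcj : c j = 0 := by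
      by_contra hne
      exact hj (Finset.mem_filter.2 ⟨Finset.mem_univ j,
        lt_of_le_of_ne (hc j) (Ne.symm hne)⟩)
    simp [hcj]
  rcases Nat.eq_zero_or_pos s.card with hcard | hcard
  · have hczero : ∀ j, c j = 0 := by
      intro j
      by_contra hne
      have hmem : j ∈ s := Finset.mem_filter.2 ⟨Finset.mem_univ j,
        lt_of_le_of_ne (hc j) (Ne.symm hne)⟩
      have := Finset.card_pos.2 ⟨j, hmem⟩
      omega
    refine ⟨0, fun _ => a, fun _ => b, ha, hb, fun k hk hk' => by omega, 0, ?_⟩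
    intro x hx
    simp [JFrac, hczero]
  · obtain ⟨m, hm⟩ : ∃ m, s.card = m + 1 := ⟨s.card - 1, by omega⟩
    let e := s.orderIsoOfFin hm
    let f0 : Fin (m+1) → Fin d := fun i => (e i : Fin d)
    have hf0inj : Function.Injective f0 := fun i j hij => by
      apply e.injective; exact Subtype.ext hij
    have hf0mem : ∀ i, f0 i ∈ s := fun i => (e i).2
    let lam0 := lam ∘ f0
    let σ := Tuple.sort lam0
    let lam1 := lam0 ∘ σ
    have hinj1 : Function.Injective lam1 :=
      (hinj.comp hf0inj).comp σ.injective
    have hmono1 : StrictMono lam1 :=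
      (Tuple.monotone_sort lam0).strictMono_of_injective hinj1
    let c1 : Fin (m+1) → ℝ := fun i => c (f0 (σ i))
    have hc1 : ∀ i, 0 < c1 i := fun i =>
      (Finset.mem_filter.1 (hf0mem (σ i))).2
    have hlam1 : ∀ i, 0 < lam1 i := fun i => hlam _
    have hsum2 : ∀ x : ℝ, ∑ j ∈ s, c j / (x + lam j) = ∑ i, c1 i / (x + lam1 i) := by
      intro x
      have h1 : ∑ j ∈ s, c j / (x + lam j)
          = ∑ i : Fin (m+1), c (f0 i) / (x + lam (f0 i)) := by
        rw [← Finset.sum_coe_sort s (fun j => c j / (x + lam j))]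
        exact (Equiv.sum_comp e.toEquiv (fun j => c (j : Fin d) / (x + lam (j : Fin d)))).symm
      have h2 : ∑ i : Fin (m+1), c (f0 i) / (x + lam (f0 i))
          = ∑ i : Fin (m+1), c1 i / (x + lam1 i) :=
        (Equiv.sum_comp σ (fun i => c (f0 i) / (x + lam (f0 i)))).symm
      rw [h1, h2]
    obtain ⟨N, A, B, hAB, hJ⟩ := sum_inv_jfrac m lam1 c1 hlam1 hmono1 hc1
    set Afin : ℕ → ℝ := fun k => if k ≤ N then A k else a with hAfin
    set Bfin : ℕ → ℝ := fun k => if k ≤ N then B k else b with hBfin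
    have hkey : ∀ x : ℝ, 0 < x →
        a * x + b - ∑ j, c j / (x + lam j) = JFracR Afin Bfin (N+1) x := by
      intro x hx
      have hS : 0 < ∑ i, c1 i / (x + lam1 i) := by
        refine Finset.sum_pos (fun i _ => div_pos (hc1 i) ?_) ⟨0, Finset.mem_univ 0⟩
        have := hlam1 i; linarith
      have hcongr : JFracR Afin Bfin N x = JFracR A B N x :=
        jfracR_congr N (fun k hk => by simp [hAfin, hBfin, hk]) x
      have hN1 : ¬ (N+1 ≤ N) := by omega
      rw [JFracR, hcongr, hJ x hx, one_div_one_div]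
      simp only [hAfin, hBfin, hN1, if_neg, not_false_iff]
      rw [hsum x, hsum2 x]
    refine ⟨N+1, fun k => Afin (N+1-k), fun k => Bfin (N+1-k), ?_, ?_, ?_, 0, ?_⟩
    · simpa [hAfin] using ha
    · simpa [hBfin] using hb
    · intro k hk hk'
      have h1 : N+1-k ≤ N := by omega
      have := hAB (N+1-k) h1
      simp only [hAfin, hBfin, h1, if_pos]
      exact this
    · intro x hx
      have hcongr2 : JFrac (fun k => (fun k => Afin (N+1-k)) (N+1-k))
          (fun k => (fun k => Bfin (N+1-k)) (N+1-k)) (N+1) (x : ℂ)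
          = JFrac Afin Bfin (N+1) (x : ℂ) := by
        rw [jfrac_eq_ofReal, jfrac_eq_ofReal]
        norm_cast
        exact jfracR_congr (N+1) (fun k hk => by
          have : N+1-(N+1-k) = k := by omega
          simp [this]) x
      rw [hcongr2, jfrac_eq_ofReal, ← hkey x hx]
      push_cast
      ring
end

section
/- Let f(z) = A z + B − Σ_{j=1}^d C_j/(z+λ_j) belong to the class 𝒢. Then f admits a compressed-resolvent representation: there exist an integer m ≥ 0, a positive semidefinite matrix S ∈ M_m(ℂ), and a matrix K ∈ M_{m×n}(ℂ) such that f(z) = z·( A + K* (S + z·I_m)⁻¹ K ) for every complex z for which S + z·I_m is invertible and z is not a pole of f (in particular for all z with Im z ≠ 0 and all real z > 0). -/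
open Matrix BigOperators Complex
open scoped ComplexOrder

lemma Matrix.PosSemidef.exists_sqrt_aux {n : ℕ} {M : Matrix (Fin n) (Fin n) ℂ}
    (h : M.PosSemidef) : ∃ X : Matrix (Fin n) (Fin n) ℂ, X.PosSemidef ∧ X * X = M := by
  classical
  open scoped MatrixOrder in
  obtain ⟨X, hX, hX2, hXX⟩ :=
    CFC.exists_sqrt_of_isSelfAdjoint_of_quasispectrumRestricts h.isHermitian
      (QuasispectrumRestricts.nnreal_of_nonneg h.nonneg)
  open scoped MatrixOrder in
  exact ⟨X, (nonneg_iff_isSelfAdjoint_and_quasispectrumRestricts.mpr ⟨hX, hX2⟩).posSemidef, hXX⟩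

noncomputable def Matrix.PosSemidef.sqrt {n : ℕ} {M : Matrix (Fin n) (Fin n) ℂ}
    (h : M.PosSemidef) : Matrix (Fin n) (Fin n) ℂ := Classical.choose h.exists_sqrt_aux

lemma Matrix.PosSemidef.posSemidef_sqrt {n : ℕ} {M : Matrix (Fin n) (Fin n) ℂ}
    (h : M.PosSemidef) : h.sqrt.PosSemidef := (Classical.choose_spec h.exists_sqrt_aux).1

lemma Matrix.PosSemidef.sqrt_mul_self {n : ℕ} {M : Matrix (Fin n) (Fin n) ℂ}
    (h : M.PosSemidef) : h.sqrt * h.sqrt = M := (Classical.choose_spec h.exists_sqrt_aux).2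

lemma psd_smul_aux {n : ℕ} {C : Matrix (Fin n) (Fin n) ℂ} (hC : C.PosSemidef)
    {c : ℂ} (hc : 0 ≤ c) : (c • C).PosSemidef := by
  have hcs : star c = c := by
    rw [Complex.star_def, Complex.conj_eq_iff_im]
    exact (Complex.le_def.mp hc).2.symm
  refine ⟨?_, fun x => ?_⟩
  · rw [Matrix.IsHermitian, conjTranspose_smul, hC.1.eq, hcs]
  · convert mul_nonneg hc (hC.2 x) using 1
    rw [Finsupp.mul_sum]
    refine Finsupp.sum_congr fun i _ => ?_
    rw [Finsupp.mul_sum]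
    refine Finsupp.sum_congr fun j _ => ?_
    rw [Matrix.smul_apply, smul_eq_mul]
    ring


/-- **compressed-resolvent / Naimark dilation representation.** Every
`f ∈ 𝒢` can be written as `f(z) = z (A + K* (S + z I)⁻¹ K)` with `S ≥ 0` acting on a
possibly larger finite-dimensional space and `K` a linear transform, whenever `S + z I`
is invertible and `z` is not a pole of `f`. -/
theorem compressed_resolvent_representation {n d : ℕ}
    (lam : Fin d → ℝ) (hlam : ∀ j, 0 < lam j)
    (A B : Matrix (Fin n) (Fin n) ℂ) (C : Fin d → Matrix (Fin n) (Fin n) ℂ)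
    (hA : A.PosSemidef) (hB : B.PosSemidef) (hC : ∀ j, (C j).PosSemidef)
    (hf0 : (B - ∑ j, ((lam j : ℂ))⁻¹ • C j).PosSemidef) :
    ∃ (m : ℕ) (S : Matrix (Fin m) (Fin m) ℂ) (K : Matrix (Fin m) (Fin n) ℂ),
      S.PosSemidef ∧
      ∀ z : ℂ, IsUnit (S + z • (1 : Matrix (Fin m) (Fin m) ℂ)).det →
        (∀ j, z ≠ -(lam j : ℂ)) →
        z • A + B - ∑ j, (z + (lam j : ℂ))⁻¹ • C j =
          z • (A + Kᴴ * (S + z • (1 : Matrix (Fin m) (Fin m) ℂ))⁻¹ * K) := by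
  classical
  set f0 : Matrix (Fin n) (Fin n) ℂ := B - ∑ j, ((lam j : ℂ))⁻¹ • C j with hf0def
  set μ : Fin (d+1) → ℂ := Fin.cases 0 (fun j => (lam j : ℂ)) with hμ
  set M : Fin (d+1) → Matrix (Fin n) (Fin n) ℂ :=
    Fin.cases f0 (fun j => ((lam j : ℂ))⁻¹ • C j) with hMdef
  have hM : ∀ j, (M j).PosSemidef := by
    intro j
    induction j using Fin.cases with
    | zero => simpa [hMdef] using hf0
    | succ j =>
      have h1 : (0:ℂ) ≤ ((lam j : ℂ))⁻¹ := by
        rw [← Complex.ofReal_inv]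
        exact_mod_cast (inv_nonneg.mpr (hlam j).le)
      simpa [hMdef] using psd_smul_aux (hC j) h1
  set e : Fin (d+1) × Fin n ≃ Fin ((d+1)*n) := finProdFinEquiv with he
  set S₀ : Matrix (Fin (d+1) × Fin n) (Fin (d+1) × Fin n) ℂ :=
    Matrix.diagonal (fun p => μ p.1) with hS₀
  set K₀ : Matrix (Fin (d+1) × Fin n) (Fin n) ℂ :=
    (fun p i => (hM p.1).sqrt p.2 i) with hK₀
  refine ⟨(d+1)*n, S₀.submatrix e.symm e.symm, K₀.submatrix e.symm id, ?_, ?_⟩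
  · refine Matrix.PosSemidef.submatrix ?_ _
    refine Matrix.posSemidef_diagonal_iff.mpr fun p => ?_
    induction p.1 using Fin.cases with
    | zero => simp [hμ]
    | succ j =>
      simp only [hμ, Fin.cases_succ]
      exact_mod_cast (hlam j).le
  · intro z hz hpole
    rcases Nat.eq_zero_or_pos n with hn | hn
    · subst hn; ext i; exact i.elim0
    obtain ⟨i₀⟩ : Nonempty (Fin n) := ⟨⟨0, hn⟩⟩
    have hsub : S₀.submatrix e.symm e.symm + z • (1 : Matrix (Fin ((d+1)*n)) (Fin ((d+1)*n)) ℂ)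
        = (Matrix.diagonal (fun p : Fin (d+1) × Fin n => μ p.1 + z)).submatrix e.symm e.symm := by
      have h1 : (Matrix.diagonal (fun p : Fin (d+1) × Fin n => μ p.1 + z))
          = S₀ + z • (1 : Matrix (Fin (d+1) × Fin n) (Fin (d+1) × Fin n) ℂ) := by
        rw [hS₀, ← Matrix.diagonal_add]
        congr 1
        rw [smul_one_eq_diagonal]
      rw [h1]
      ext p q
      simp [Matrix.submatrix_apply, Matrix.one_apply, Matrix.add_apply, Matrix.smul_apply,
        Equiv.symm_apply_eq]
    -- nonvanishing of diagonal entries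
    rw [hsub] at hz
    rw [Matrix.det_submatrix_equiv_self, Matrix.det_diagonal] at hz
    have hne : ∀ p : Fin (d+1) × Fin n, μ p.1 + z ≠ 0 := by
      intro p
      exact Finset.prod_ne_zero_iff.mp hz.ne_zero p (Finset.mem_univ p)
    have hz0 : z ≠ 0 := by simpa [hμ] using hne (0, i₀)
    -- inverse of the diagonal matrix
    have hinv : (Matrix.diagonal (fun p : Fin (d+1) × Fin n => μ p.1 + z))⁻¹
        = Matrix.diagonal (fun p => (μ p.1 + z)⁻¹) := by
      apply Matrix.inv_eq_right_inv
      have hfun : (fun p : Fin (d+1) × Fin n => (μ p.1 + z) * (μ p.1 + z)⁻¹) = fun _ => 1 :=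
        funext fun p => mul_inv_cancel₀ (hne p)
      rw [Matrix.diagonal_mul_diagonal, hfun, Matrix.diagonal_one]
    -- the sandwich computation
    have hsand : K₀ᴴ * Matrix.diagonal (fun p : Fin (d+1) × Fin n => (μ p.1 + z)⁻¹) * K₀
        = ∑ j : Fin (d+1), (μ j + z)⁻¹ • M j := by
      have hsq : ∀ j, (hM j).sqrt * (hM j).sqrt = M j := fun j => (hM j).sqrt_mul_self
      rw [Matrix.mul_assoc]
      ext i i'
      rw [Matrix.mul_apply]
      simp only [Matrix.diagonal_mul, Matrix.conjTranspose_apply, Matrix.sum_apply,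
        Matrix.smul_apply, smul_eq_mul]
      rw [show (∑ p : Fin (d+1) × Fin n, star (K₀ p i) * ((μ p.1 + z)⁻¹ * K₀ p i'))
          = ∑ j : Fin (d+1), ∑ k : Fin n, star (K₀ (j, k) i) * ((μ j + z)⁻¹ * K₀ (j, k) i')
        from Fintype.sum_prod_type (fun p : Fin (d+1) × Fin n =>
          star (K₀ p i) * ((μ p.1 + z)⁻¹ * K₀ p i'))]
      refine Finset.sum_congr rfl fun j _ => ?_
      rw [← hsq j, Matrix.mul_apply, Finset.mul_sum]
      refine Finset.sum_congr rfl fun k _ => ?_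
      simp only [hK₀]
      rw [(hM j).posSemidef_sqrt.1.apply i k]
      ring
    have hKDK : (K₀.submatrix e.symm id)ᴴ *
          (S₀.submatrix e.symm e.symm + z • (1 : Matrix (Fin ((d+1)*n)) (Fin ((d+1)*n)) ℂ))⁻¹ *
          (K₀.submatrix e.symm id)
        = ∑ j : Fin (d+1), (μ j + z)⁻¹ • M j := by
      rw [hsub, Matrix.inv_submatrix_equiv, hinv, Matrix.conjTranspose_submatrix,
        Matrix.submatrix_mul_equiv, Matrix.submatrix_mul_equiv, Matrix.submatrix_id_id, hsand]
    rw [hKDK]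
    -- final algebra
    rw [Fin.sum_univ_succ]
    simp only [hμ, hMdef, Fin.cases_zero, Fin.cases_succ, zero_add]
    have hterm : ∀ j : Fin d, z • (((lam j : ℂ) + z)⁻¹ • (((lam j : ℂ))⁻¹ • C j))
        = ((lam j : ℂ))⁻¹ • C j - (z + (lam j : ℂ))⁻¹ • C j := by
      intro j
      have hl : (lam j : ℂ) ≠ 0 := by
        exact_mod_cast (hlam j).ne'
      have hzl : z + (lam j : ℂ) ≠ 0 := by
        intro h
        exact hpole j (eq_neg_of_add_eq_zero_left h)
      have hlz : (lam j : ℂ) + z ≠ 0 := by rwa [add_comm] at hzl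
      rw [smul_smul, smul_smul, ← sub_smul]
      congr 1
      rw [mul_assoc, ← mul_inv, ← div_eq_mul_inv, inv_eq_one_div, inv_eq_one_div,
        div_sub_div _ _ hl hzl, div_eq_div_iff (mul_ne_zero hlz hl) (mul_ne_zero hl hzl)]
      ring
    rw [smul_add, smul_add, smul_inv_smul₀ hz0, Finset.smul_sum]
    simp only [hterm]
    rw [Finset.sum_sub_distrib, hf0def]
    abel
end

section
/- Let λ_1, …, λ_d be positive real numbers and C_1, …, C_d ∈ M_n(ℂ) positive semidefinite matrices whose sum C_1 + ⋯ + C_d is positive definite. Then for every complex z with Im z ≠ 0, and also for every real z ≥ 0, the matrix Σ_{j=1}^d C_j/(z+λ_j) is invertible. -/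
open Matrix BigOperators Complex
open scoped ComplexOrder

lemma aux_key_S15 {n d : ℕ}
    (C : Fin d → Matrix (Fin n) (Fin n) ℂ) (hC : ∀ j, (C j).PosSemidef)
    (hsum : (∑ j, C j).PosDef) (c : Fin d → ℂ)
    (hker : ∀ q : Fin d → ℂ, (∀ j, 0 ≤ q j) → (∑ j, c j * q j) = 0 → ∀ j, q j = 0) :
    IsUnit (∑ j, c j • C j).det := by
  rw [isUnit_iff_ne_zero]
  intro hdet
  obtain ⟨v, hv, hMv⟩ := (Matrix.exists_mulVec_eq_zero_iff).2 hdet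
  set q : Fin d → ℂ := fun j => star v ⬝ᵥ (C j *ᵥ v) with hq
  have hq0 : ∀ j, 0 ≤ q j := fun j => (hC j).dotProduct_mulVec_nonneg v
  have hsplit : ∀ (A : Fin d → Matrix (Fin n) (Fin n) ℂ),
      (∑ j, A j) *ᵥ v = ∑ j, A j *ᵥ v := fun A =>
    map_sum (Matrix.mulVec.addMonoidHomLeft v) A Finset.univ
  have hdot : ∀ (u : Fin d → Fin n → ℂ),
      star v ⬝ᵥ (∑ j, u j) = ∑ j, star v ⬝ᵥ u j := by
    intro u
    simp only [dotProduct, Finset.sum_apply, Finset.mul_sum]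
    rw [Finset.sum_comm]
  have hsum0 : (∑ j, c j * q j) = 0 := by
    have h1 : star v ⬝ᵥ ((∑ j, c j • C j) *ᵥ v) = ∑ j, c j * q j := by
      rw [hsplit, hdot]
      refine Finset.sum_congr rfl fun j _ => ?_
      rw [Matrix.smul_mulVec, dotProduct_smul, smul_eq_mul]
    rw [hMv] at h1
    simpa using h1.symm
  have hz := hker q hq0 hsum0
  have hpos := hsum.dotProduct_mulVec_pos hv
  rw [hsplit, hdot] at hpos
  have hzero : (∑ j, star v ⬝ᵥ (C j *ᵥ v)) = 0 :=
    Finset.sum_eq_zero fun j _ => hz j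
  rw [hzero] at hpos
  exact lt_irrefl _ hpos

/-- If `C₁ + ⋯ + C_d` is positive definite, then
`∑ⱼ Cⱼ/(z+λⱼ)` is invertible for every `z` with nonzero imaginary part, and also for
every real `z ≥ 0`. -/
theorem S_invertible_offAxis_and_nonnegAxis {n d : ℕ}
    (lam : Fin d → ℝ) (hlam : ∀ j, 0 < lam j)
    (C : Fin d → Matrix (Fin n) (Fin n) ℂ) (hC : ∀ j, (C j).PosSemidef)
    (hsum : (∑ j, C j).PosDef) :
    (∀ z : ℂ, z.im ≠ 0 → IsUnit (∑ j, (z + (lam j : ℂ))⁻¹ • C j).det)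
    ∧ (∀ x : ℝ, 0 ≤ x → IsUnit (∑ j, ((x : ℂ) + (lam j : ℂ))⁻¹ • C j).det) := by
  constructor
  · intro z hz
    apply aux_key_S15 C hC hsum
    intro q hq0 hsum0 j
    have him : ∀ k, (q k).im = 0 := fun k => ((Complex.le_def).1 (hq0 k)).2.symm
    have hre : ∀ k, 0 ≤ (q k).re := fun k => by
      have := ((Complex.le_def).1 (hq0 k)).1; simpa using this
    have hns : ∀ k, 0 < Complex.normSq (z + (lam k : ℂ)) := fun k => by
      apply Complex.normSq_pos.2
      intro h
      have : (z + (lam k : ℂ)).im = 0 := by rw [h]; simp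
      simp at this; exact hz this
    -- take imaginary part of the sum
    have himsum : (∑ k, (z + (lam k : ℂ))⁻¹ * q k).im = 0 := by rw [hsum0]; simp
    rw [Complex.im_sum] at himsum
    have hterm : ∀ k, ((z + (lam k : ℂ))⁻¹ * q k).im
        = -z.im * ((q k).re / Complex.normSq (z + (lam k : ℂ))) := by
      intro k
      rw [Complex.mul_im, him k, Complex.inv_im]
      simp [div_eq_mul_inv]
      ring
    rw [Finset.sum_congr rfl (fun k _ => hterm k), ← Finset.mul_sum] at himsum
    have hsum' : (∑ k, (q k).re / Complex.normSq (z + (lam k : ℂ))) = 0 := by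
      rcases mul_eq_zero.1 himsum with h | h
      · exact absurd (neg_eq_zero.1 h) hz
      · exact h
    have hall := (Finset.sum_eq_zero_iff_of_nonneg (fun k _ =>
      div_nonneg (hre k) (le_of_lt (hns k)))).1 hsum' j (Finset.mem_univ j)
    have : (q j).re = 0 := by
      have := div_eq_zero_iff.1 hall
      rcases this with h | h
      · exact h
      · exact absurd h (ne_of_gt (hns j))
    exact Complex.ext this (him j)
  · intro x hx
    apply aux_key_S15 C hC hsum
    intro q hq0 hsum0 j
    have him : ∀ k, (q k).im = 0 := fun k => ((Complex.le_def).1 (hq0 k)).2.symm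
    have hre : ∀ k, 0 ≤ (q k).re := fun k => by
      have := ((Complex.le_def).1 (hq0 k)).1; simpa using this
    have hpos : ∀ k, 0 < x + lam k := fun k => add_pos_of_nonneg_of_pos hx (hlam k)
    have hresum : (∑ k, ((x : ℂ) + (lam k : ℂ))⁻¹ * q k).re = 0 := by rw [hsum0]; simp
    rw [Complex.re_sum] at hresum
    have hterm : ∀ k, (((x : ℂ) + (lam k : ℂ))⁻¹ * q k).re
        = (x + lam k)⁻¹ * (q k).re := by
      intro k
      have hcast : ((x : ℂ) + (lam k : ℂ)) = (((x + lam k) : ℝ) : ℂ) := by push_cast; ring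
      rw [hcast, ← Complex.ofReal_inv, Complex.re_ofReal_mul]
    rw [Finset.sum_congr rfl (fun k _ => hterm k)] at hresum
    have hall := (Finset.sum_eq_zero_iff_of_nonneg (fun k _ =>
      mul_nonneg (le_of_lt (inv_pos.2 (hpos k))) (hre k))).1 hresum j (Finset.mem_univ j)
    have : (q j).re = 0 := by
      rcases mul_eq_zero.1 hall with h | h
      · exact absurd h (ne_of_gt (inv_pos.2 (hpos j)))
      · exact h
    exact Complex.ext this (him j)
end
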